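/- Let 𝕊, 𝕏, 𝕐 be compact metric measure spaces, and for optimal GW plans π_𝕊^𝕏 ∈ Π_o(𝕊,𝕏) and π_𝕊^𝕐 ∈ Π_o(𝕊,𝕐) define GW²_𝕊(π_𝕊^𝕏, π_𝕊^𝕐) := inf over 3-plans π ∈ P(S×X×Y) with P¹²_#π = π_𝕊^𝕏 and P¹³_#π = π_𝕊^𝕐 of ∫∫|d_X(x,x')−d_Y(y,y')|² dπ(s,x,y)dπ(s',x',y'). Then GW(𝕏,𝕐) ≤ GW_𝕊(π_𝕊^𝕏, π_𝕊^𝕐), and hence GW(𝕏,𝕐) ≤ LGW_𝕊(𝕏,𝕐) := inf over optimal plans of GW_𝕊. -/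

import Mathlib

open MeasureTheory
open scoped ENNReal

noncomputable section

variable {S X Y : Type*}
  [MetricSpace S] [CompactSpace S] [MeasurableSpace S] [BorelSpace S]
  [MetricSpace X] [CompactSpace X] [MeasurableSpace X] [BorelSpace X]
  [MetricSpace Y] [CompactSpace Y] [MeasurableSpace Y] [BorelSpace Y]

def GWCost {A B : Type*} [MetricSpace A] [MetricSpace B]
    [MeasurableSpace A] [MeasurableSpace B] (π : Measure (A × B)) : ℝ≥0∞ :=
  ∫⁻ q, ENNReal.ofReal ((dist q.1.1 q.2.1 - dist q.1.2 q.2.2) ^ 2) ∂(π.prod π)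

def IsCoupling {A B : Type*} [MeasurableSpace A] [MeasurableSpace B]
    (π : Measure (A × B)) (μ : Measure A) (ν : Measure B) : Prop :=
  π.map Prod.fst = μ ∧ π.map Prod.snd = ν

def IsOptimalGWPlan {A B : Type*} [MetricSpace A] [MetricSpace B]
    [MeasurableSpace A] [MeasurableSpace B]
    (π : Measure (A × B)) (μ : Measure A) (ν : Measure B) : Prop :=
  IsCoupling π μ ν ∧ ∀ π', IsCoupling π' μ ν → GWCost π ≤ GWCost π'

/-- GW cost of a 3-plan, measuring the distortion between the `X` and `Y` components. -/
def GW3Cost (π : Measure (S × X × Y)) : ℝ≥0∞ :=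
  ∫⁻ q, ENNReal.ofReal ((dist q.1.2.1 q.2.2.1 - dist q.1.2.2 q.2.2.2) ^ 2) ∂(π.prod π)

theorem stmt_13 (σ : Measure S) (μ : Measure X) (ν : Measure Y)
    [IsProbabilityMeasure σ] [IsProbabilityMeasure μ] [IsProbabilityMeasure ν] :
    sInf {c | ∃ π : Measure (X × Y), IsCoupling π μ ν ∧ c = GWCost π} ≤
      sInf {c | ∃ (πX : Measure (S × X)) (πY : Measure (S × Y))
          (π3 : Measure (S × X × Y)),
        IsOptimalGWPlan πX σ μ ∧ IsOptimalGWPlan πY σ ν ∧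
        π3.map (fun q => (q.1, q.2.1)) = πX ∧
        π3.map (fun q => (q.1, q.2.2)) = πY ∧
        c = GW3Cost π3} := by
  refine le_sInf ?_
  rintro c ⟨πX, πY, π3, ⟨⟨hX1, hX2⟩, -⟩, ⟨⟨hY1, hY2⟩, -⟩, h12, h13, rfl⟩
  have hg : Measurable (fun q : S × X × Y => q.2) := measurable_snd
  have hf12 : Measurable (fun q : S × X × Y => (q.1, q.2.1)) := by fun_prop
  have hf13 : Measurable (fun q : S × X × Y => (q.1, q.2.2)) := by fun_prop
  have hπ3 : IsProbabilityMeasure π3 := by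
    constructor
    have h1 : πX Set.univ = 1 := by
      have := congrArg (fun m : Measure X => m Set.univ) hX2
      simpa [Measure.map_apply measurable_snd MeasurableSet.univ] using this
    have h2 : π3 Set.univ = πX Set.univ := by
      rw [← h12, Measure.map_apply hf12 MeasurableSet.univ, Set.preimage_univ]
    rw [h2, h1]
  refine sInf_le ⟨π3.map (fun q => q.2), ⟨?_, ?_⟩, ?_⟩
  · rw [Measure.map_map measurable_fst hg, ← hX2, ← h12,
      Measure.map_map measurable_snd hf12]
    rfl
  · rw [Measure.map_map measurable_snd hg, ← hY2, ← h13,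
      Measure.map_map measurable_snd hf13]
    rfl
  · unfold GWCost GW3Cost
    rw [Measure.map_prod_map _ _ hg hg,
      lintegral_map (by fun_prop) (hg.prodMap hg)]
    rfl
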